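/- arXiv:1605.07888 — 2 statements merged into one kernel-verified Lean document; each statement's English description precedes it below -/
import Mathlib

section
/- Suppose each interfering flow j's contribution is computed with the new bound I_{j,i} = C_j − σ_{j,i} where σ_{j,i} ≥ 0, and both the old and new monotone iterations (started at C_i) converge to fixed points R and R*. Then R* ≤ D_i whenever R ≤ D_i; i.e., every flow deemed schedulable by the old analysis remains schedulable under the new analysis. -/
/-- Every flow deemed schedulable by the old analysis remains schedulable under
the new one: if the old least fixed point R ≤ D_i then the new least fixed
point R* ≤ D_i. -/
theorem schedulability_preserved {ι : Type*} (F : Finset ι) (Ci Di : ℝ)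
    (T J C I σ : ι → ℝ)
    (hCi : 0 < Ci) (hDi : 0 < Di)
    (hT : ∀ j ∈ F, 0 < T j) (hJ : ∀ j ∈ F, 0 ≤ J j)
    (hσ : ∀ j ∈ F, 0 ≤ σ j) (hIdef : ∀ j ∈ F, I j = C j - σ j)
    (hI : ∀ j ∈ F, 0 ≤ I j ∧ I j ≤ C j)
    (x y : ℕ → ℝ)
    (hx0 : x 0 = Ci)
    (hx : ∀ n, x (n + 1) = Ci + ∑ j ∈ F, (⌈(x n + J j) / T j⌉ : ℝ) * I j)
    (hy0 : y 0 = Ci)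
    (hy : ∀ n, y (n + 1) = Ci + ∑ j ∈ F, (⌈(y n + J j) / T j⌉ : ℝ) * C j)
    (hxb : BddAbove (Set.range x)) (hyb : BddAbove (Set.range y))
    (Rstar R : ℝ)
    (hRstar : Rstar = sSup (Set.range x)) (hR : R = sSup (Set.range y))
    (hfixs : Rstar = Ci + ∑ j ∈ F, (⌈(Rstar + J j) / T j⌉ : ℝ) * I j)
    (hfix : R = Ci + ∑ j ∈ F, (⌈(R + J j) / T j⌉ : ℝ) * C j)
    (hsched : R ≤ Di) :
    Rstar ≤ Di := by
  have key : ∀ n, 0 < x n ∧ x n ≤ y n := by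
    intro n
    induction n with
    | zero => constructor <;> simp [hx0, hy0, hCi, le_refl]
    | succ n ih =>
      obtain ⟨hpos, hle⟩ := ih
      constructor
      · rw [hx n]
        have : 0 ≤ ∑ j ∈ F, (⌈(x n + J j) / T j⌉ : ℝ) * I j := by
          apply Finset.sum_nonneg
          intro j hj
          apply mul_nonneg _ (hI j hj).1
          have : (0:ℝ) ≤ (x n + J j) / T j :=
            div_nonneg (by linarith [hJ j hj]) (hT j hj).le
          exact_mod_cast (Int.ceil_nonneg this)
        linarith
      · rw [hx n, hy n]
        gcongr Ci + ?_
        apply Finset.sum_le_sum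
        intro j hj
        have hC : 0 ≤ C j := le_trans (hI j hj).1 (hI j hj).2
        have hceil : (0:ℤ) ≤ ⌈(x n + J j) / T j⌉ := by
          apply Int.ceil_nonneg
          exact div_nonneg (by linarith [hJ j hj]) (hT j hj).le
        have hmono : (⌈(x n + J j) / T j⌉ : ℝ) ≤ (⌈(y n + J j) / T j⌉ : ℝ) := by
          exact_mod_cast Int.ceil_le_ceil (by gcongr; exact (hT j hj).le)
        calc (⌈(x n + J j) / T j⌉ : ℝ) * I j
            ≤ (⌈(x n + J j) / T j⌉ : ℝ) * C j := by
              apply mul_le_mul_of_nonneg_left (hI j hj).2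
              exact_mod_cast hceil
          _ ≤ (⌈(y n + J j) / T j⌉ : ℝ) * C j :=
              mul_le_mul_of_nonneg_right hmono hC
  rw [hRstar]
  apply csSup_le (Set.range_nonempty x)
  rintro _ ⟨n, rfl⟩
  have hyR : y n ≤ R := hR ▸ le_csSup hyb ⟨n, rfl⟩
  linarith [(key n).2]
end

section
/- Under XY (dimension-ordered) routing on a 2D mesh, the set of links shared by any two flows' paths, if nonempty, forms a single contiguous subpath of each flow's path (a single contention domain). -/
/-- A directed link of a 2D mesh: an ordered pair of (integer-coordinate) nodes. -/
abbrev MeshLink := (ℤ × ℤ) × (ℤ × ℤ)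

/-- Links of the x-dimension segment of an XY route, at row `y`, from `x₁` to `x₂`. -/
def xLinks (y x₁ x₂ : ℤ) : List MeshLink :=
  if x₁ ≤ x₂ then
    (List.range (x₂ - x₁).toNat).map (fun k => ((x₁ + k, y), (x₁ + k + 1, y)))
  else
    (List.range (x₁ - x₂).toNat).map (fun k => ((x₁ - k, y), (x₁ - k - 1, y)))

/-- Links of the y-dimension segment of an XY route, at column `x`, from `y₁` to `y₂`. -/
def yLinks (x y₁ y₂ : ℤ) : List MeshLink :=
  if y₁ ≤ y₂ then
    (List.range (y₂ - y₁).toNat).map (fun k => ((x, y₁ + k), (x, y₁ + k + 1)))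
  else
    (List.range (y₁ - y₂).toNat).map (fun k => ((x, y₁ - k), (x, y₁ - k - 1)))

/-- The XY (dimension-ordered) route from `s` to `d`: first along x at row `s.2`,
then along y at column `d.1`. -/
def xyRoute (s d : ℤ × ℤ) : List MeshLink :=
  xLinks s.2 s.1 d.1 ++ yLinks d.1 s.2 d.2

lemma flatMap_single {α β : Type*} (l : List α) (f : α → β) :
    (l.flatMap fun a => [f a]) = l.map f := by
  induction l with
  | nil => rfl
  | cons a t ih => simp [List.flatMap_cons, ih]

lemma xLinks_le {y x₁ x₂ : ℤ} (h : x₁ ≤ x₂) :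
    xLinks y x₁ x₂ =
      (List.range (x₂ - x₁).toNat).map (fun k : ℕ => ((x₁ + k, y), (x₁ + k + 1, y))) := by
  unfold xLinks
  rw [if_pos h]
  simp only [bind_pure_comp, List.map_eq_map, List.map_map, Function.comp_def]

lemma xLinks_gt {y x₁ x₂ : ℤ} (h : ¬ x₁ ≤ x₂) :
    xLinks y x₁ x₂ =
      (List.range (x₁ - x₂).toNat).map (fun k : ℕ => ((x₁ - k, y), (x₁ - k - 1, y))) := by
  unfold xLinks
  rw [if_neg h]
  simp only [bind_pure_comp, List.map_eq_map, List.map_map, Function.comp_def]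

lemma yLinks_le {x y₁ y₂ : ℤ} (h : y₁ ≤ y₂) :
    yLinks x y₁ y₂ =
      (List.range (y₂ - y₁).toNat).map (fun k : ℕ => ((x, y₁ + k), (x, y₁ + k + 1))) := by
  unfold yLinks
  rw [if_pos h]
  simp only [bind_pure_comp, List.map_eq_map, List.map_map, Function.comp_def]

lemma yLinks_gt {x y₁ y₂ : ℤ} (h : ¬ y₁ ≤ y₂) :
    yLinks x y₁ y₂ =
      (List.range (y₁ - y₂).toNat).map (fun k : ℕ => ((x, y₁ - k), (x, y₁ - k - 1))) := by
  unfold yLinks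
  rw [if_neg h]
  simp only [bind_pure_comp, List.map_eq_map, List.map_map, Function.comp_def]

lemma mem_xLinks {l : MeshLink} {y x₁ x₂ : ℤ} :
    l ∈ xLinks y x₁ x₂ ↔
      (∃ a : ℤ, l = ((a, y), (a + 1, y)) ∧ x₁ ≤ a ∧ a < x₂) ∨
      (∃ a : ℤ, l = ((a, y), (a - 1, y)) ∧ x₂ < a ∧ a ≤ x₁) := by
  by_cases h : x₁ ≤ x₂
  · rw [xLinks_le h]
    simp only [List.mem_map, List.mem_range]
    constructor
    · rintro ⟨m, hm, rfl⟩
      exact Or.inl ⟨x₁ + m, rfl, by omega, by omega⟩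
    · rintro (⟨a, rfl, h1, h2⟩ | ⟨a, rfl, h1, h2⟩)
      · exact ⟨(a - x₁).toNat, by omega, by simp; omega⟩
      · omega
  · rw [xLinks_gt h]
    simp only [List.mem_map, List.mem_range]
    constructor
    · rintro ⟨m, hm, rfl⟩
      exact Or.inr ⟨x₁ - m, rfl, by omega, by omega⟩
    · rintro (⟨a, rfl, h1, h2⟩ | ⟨a, rfl, h1, h2⟩)
      · omega
      · exact ⟨(x₁ - a).toNat, by omega, by simp; omega⟩

lemma mem_yLinks {l : MeshLink} {x y₁ y₂ : ℤ} :
    l ∈ yLinks x y₁ y₂ ↔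
      (∃ b : ℤ, l = ((x, b), (x, b + 1)) ∧ y₁ ≤ b ∧ b < y₂) ∨
      (∃ b : ℤ, l = ((x, b), (x, b - 1)) ∧ y₂ < b ∧ b ≤ y₁) := by
  by_cases h : y₁ ≤ y₂
  · rw [yLinks_le h]
    simp only [List.mem_map, List.mem_range]
    constructor
    · rintro ⟨m, hm, rfl⟩
      exact Or.inl ⟨y₁ + m, rfl, by omega, by omega⟩
    · rintro (⟨b, rfl, h1, h2⟩ | ⟨b, rfl, h1, h2⟩)
      · exact ⟨(b - y₁).toNat, by omega, by simp; omega⟩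
      · omega
  · rw [yLinks_gt h]
    simp only [List.mem_map, List.mem_range]
    constructor
    · rintro ⟨m, hm, rfl⟩
      exact Or.inr ⟨y₁ - m, rfl, by omega, by omega⟩
    · rintro (⟨b, rfl, h1, h2⟩ | ⟨b, rfl, h1, h2⟩)
      · omega
      · exact ⟨(y₁ - b).toNat, by omega, by simp; omega⟩

lemma rlink_mem {a y : ℤ} {s d : ℤ × ℤ} :
    ((a, y), (a + 1, y)) ∈ xyRoute s d ↔ y = s.2 ∧ s.1 ≤ a ∧ a < d.1 := by
  unfold xyRoute
  rw [List.mem_append, mem_xLinks, mem_yLinks]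
  constructor
  · rintro ((⟨a', h, h1, h2⟩ | ⟨a', h, h1, h2⟩) | (⟨b, h, h1, h2⟩ | ⟨b, h, h1, h2⟩)) <;>
      (simp only [Prod.mk.injEq] at h; try omega)
  · rintro ⟨rfl, h1, h2⟩; exact Or.inl (Or.inl ⟨a, rfl, h1, h2⟩)

lemma llink_mem {a y : ℤ} {s d : ℤ × ℤ} :
    ((a, y), (a - 1, y)) ∈ xyRoute s d ↔ y = s.2 ∧ d.1 < a ∧ a ≤ s.1 := by
  unfold xyRoute
  rw [List.mem_append, mem_xLinks, mem_yLinks]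
  constructor
  · rintro ((⟨a', h, h1, h2⟩ | ⟨a', h, h1, h2⟩) | (⟨b, h, h1, h2⟩ | ⟨b, h, h1, h2⟩)) <;>
      (simp only [Prod.mk.injEq] at h; try omega)
  · rintro ⟨rfl, h1, h2⟩; exact Or.inl (Or.inr ⟨a, rfl, h1, h2⟩)

lemma ulink_mem {x b : ℤ} {s d : ℤ × ℤ} :
    ((x, b), (x, b + 1)) ∈ xyRoute s d ↔ x = d.1 ∧ s.2 ≤ b ∧ b < d.2 := by
  unfold xyRoute
  rw [List.mem_append, mem_xLinks, mem_yLinks]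
  constructor
  · rintro ((⟨a', h, h1, h2⟩ | ⟨a', h, h1, h2⟩) | (⟨b', h, h1, h2⟩ | ⟨b', h, h1, h2⟩)) <;>
      (simp only [Prod.mk.injEq] at h; try omega)
  · rintro ⟨rfl, h1, h2⟩; exact Or.inr (Or.inl ⟨b, rfl, h1, h2⟩)

lemma dlink_mem {x b : ℤ} {s d : ℤ × ℤ} :
    ((x, b), (x, b - 1)) ∈ xyRoute s d ↔ x = d.1 ∧ d.2 < b ∧ b ≤ s.2 := by
  unfold xyRoute
  rw [List.mem_append, mem_xLinks, mem_yLinks]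
  constructor
  · rintro ((⟨a', h, h1, h2⟩ | ⟨a', h, h1, h2⟩) | (⟨b', h, h1, h2⟩ | ⟨b', h, h1, h2⟩)) <;>
      (simp only [Prod.mk.injEq] at h; try omega)
  · rintro ⟨rfl, h1, h2⟩; exact Or.inr (Or.inr ⟨b, rfl, h1, h2⟩)

lemma length_xyRoute (s d : ℤ × ℤ) :
    (xyRoute s d).length = (d.1 - s.1).natAbs + (d.2 - s.2).natAbs := by
  unfold xyRoute
  rw [List.length_append]
  by_cases hx : s.1 ≤ d.1 <;> by_cases hy : s.2 ≤ d.2 <;>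
    first
    | (rw [xLinks_le hx] <;> (try rw [yLinks_le hy]) <;> (try rw [yLinks_gt hy]) <;>
        simp [List.length_map, List.length_range] <;> omega)
    | (rw [xLinks_gt hx] <;> (try rw [yLinks_le hy]) <;> (try rw [yLinks_gt hy]) <;>
        simp [List.length_map, List.length_range] <;> omega)

lemma route_elem (s d : ℤ × ℤ) (i : ℕ) (h : i < (xyRoute s d).length) :
    (∃ a : ℤ, (xyRoute s d)[i] = ((a, s.2), (a + 1, s.2)) ∧ s.1 ≤ a ∧ a < d.1 ∧
      i = (a - s.1).toNat) ∨
    (∃ a : ℤ, (xyRoute s d)[i] = ((a, s.2), (a - 1, s.2)) ∧ d.1 < a ∧ a ≤ s.1 ∧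
      i = (s.1 - a).toNat) ∨
    (∃ b : ℤ, (xyRoute s d)[i] = ((d.1, b), (d.1, b + 1)) ∧ s.2 ≤ b ∧ b < d.2 ∧
      i = (d.1 - s.1).natAbs + (b - s.2).toNat) ∨
    (∃ b : ℤ, (xyRoute s d)[i] = ((d.1, b), (d.1, b - 1)) ∧ d.2 < b ∧ b ≤ s.2 ∧
      i = (d.1 - s.1).natAbs + (s.2 - b).toNat) := by
  have hlen := length_xyRoute s d
  unfold xyRoute at h ⊢
  by_cases hx : s.1 ≤ d.1
  · simp only [xLinks_le hx] at h ⊢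
    by_cases hi : i < (d.1 - s.1).toNat
    · rw [List.getElem_append_left (by simpa using hi)]
      rw [List.getElem_map, List.getElem_range]
      exact Or.inl ⟨s.1 + i, rfl, by omega, by omega, by omega⟩
    · have hge : (List.map (fun k : ℕ => ((s.1 + k, s.2), (s.1 + k + 1, s.2)))
          (List.range (d.1 - s.1).toNat)).length ≤ i := by
        simpa using Nat.le_of_not_lt hi
      rw [List.getElem_append_right hge]
      by_cases hy : s.2 ≤ d.2
      · simp only [yLinks_le hy] at h ⊢
        rw [List.getElem_map, List.getElem_range]
        simp only [List.length_map, List.length_range]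
        refine Or.inr (Or.inr (Or.inl ⟨s.2 + ((i - (d.1 - s.1).toNat : ℕ) : ℤ), rfl, by omega, ?_, ?_⟩))
        · simp only [List.length_append, List.length_map, List.length_range] at h; omega
        · simp only [List.length_append, List.length_map, List.length_range] at h; omega
      · simp only [yLinks_gt hy] at h ⊢
        rw [List.getElem_map, List.getElem_range]
        simp only [List.length_map, List.length_range]
        refine Or.inr (Or.inr (Or.inr ⟨s.2 - ((i - (d.1 - s.1).toNat : ℕ) : ℤ), rfl, ?_, by omega, ?_⟩))
        · simp only [List.length_append, List.length_map, List.length_range] at h; omega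
        · simp only [List.length_append, List.length_map, List.length_range] at h; omega
  · simp only [xLinks_gt hx] at h ⊢
    by_cases hi : i < (s.1 - d.1).toNat
    · rw [List.getElem_append_left (by simpa using hi)]
      rw [List.getElem_map, List.getElem_range]
      exact Or.inr (Or.inl ⟨s.1 - i, rfl, by omega, by omega, by omega⟩)
    · have hge : (List.map (fun k : ℕ => ((s.1 - k, s.2), (s.1 - k - 1, s.2)))
          (List.range (s.1 - d.1).toNat)).length ≤ i := by
        simpa using Nat.le_of_not_lt hi
      rw [List.getElem_append_right hge]
      by_cases hy : s.2 ≤ d.2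
      · simp only [yLinks_le hy] at h ⊢
        rw [List.getElem_map, List.getElem_range]
        simp only [List.length_map, List.length_range]
        refine Or.inr (Or.inr (Or.inl ⟨s.2 + ((i - (s.1 - d.1).toNat : ℕ) : ℤ), rfl, by omega, ?_, ?_⟩))
        · simp only [List.length_append, List.length_map, List.length_range] at h; omega
        · simp only [List.length_append, List.length_map, List.length_range] at h; omega
      · simp only [yLinks_gt hy] at h ⊢
        rw [List.getElem_map, List.getElem_range]
        simp only [List.length_map, List.length_range]
        refine Or.inr (Or.inr (Or.inr ⟨s.2 - ((i - (s.1 - d.1).toNat : ℕ) : ℤ), rfl, ?_, by omega, ?_⟩))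
        · simp only [List.length_append, List.length_map, List.length_range] at h; omega
        · simp only [List.length_append, List.length_map, List.length_range] at h; omega

def Contig {α : Type*} (p : α → Bool) (L : List α) : Prop :=
  ∀ (i j k : ℕ) (hij : i < j) (hjk : j < k) (hk : k < L.length),
    p (L[i]'(by omega)) = true → p (L[k]'hk) = true → p (L[j]'(by omega)) = true

lemma Contig.tail {α : Type*} {p : α → Bool} {a : α} {t : List α} (h : Contig p (a :: t)) :
    Contig p t := by
  intro i j k hij hjk hk hi hk'
  have := h (i+1) (j+1) (k+1) (by omega) (by omega) (by simpa using Nat.succ_lt_succ hk)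
  simpa using this (by simpa using hi) (by simpa using hk')

lemma filter_eq_takeWhile {α : Type*} {p : α → Bool} :
    ∀ (t : List α) (a : α), p a = true → Contig p (a :: t) → t.filter p = t.takeWhile p := by
  intro t
  induction t with
  | nil => intro _ _ _; rfl
  | cons b t' ih =>
    intro a ha hC
    by_cases hb : p b = true
    · rw [List.filter_cons_of_pos hb, List.takeWhile_cons_of_pos hb, ih b hb hC.tail]
    · have hb' : p b = false := by simpa using hb
      rw [List.filter_cons_of_neg (by simp [hb']), List.takeWhile_cons_of_neg (by simp [hb'])]
      rw [List.filter_eq_nil_iff]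
      intro z hz
      obtain ⟨m, hm, hmz⟩ := List.mem_iff_getElem.mp hz
      intro hpz
      have := hC 0 1 (m+2) (by omega) (by omega)
        (by simpa using Nat.succ_lt_succ (Nat.succ_lt_succ hm)) ha
        (by simpa [hmz] using hpz)
      simp [hb'] at this

lemma Contig.filter_infix {α : Type*} {p : α → Bool} :
    ∀ {L : List α}, Contig p L → L.filter p <:+: L := by
  intro L
  induction L with
  | nil => simp
  | cons a t ih =>
    intro hC
    by_cases ha : p a = true
    · rw [List.filter_cons_of_pos ha, filter_eq_takeWhile t a ha hC,
        ← List.takeWhile_cons_of_pos ha]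
      exact (List.takeWhile_prefix p).isInfix
    · rw [List.filter_cons_of_neg (by simpa using ha)]
      exact (ih hC.tail).trans (List.suffix_cons a t).isInfix

lemma contig_xyRoute (s d s' d' : ℤ × ℤ) :
    Contig (fun l => decide (l ∈ xyRoute s' d')) (xyRoute s d) := by
  intro i j k hij hjk hk hx hy
  simp only [decide_eq_true_eq] at hx hy ⊢
  rcases route_elem s d i (by omega) with
      (⟨a₁, e₁, u₁, v₁, w₁⟩ | ⟨a₁, e₁, u₁, v₁, w₁⟩ | ⟨a₁, e₁, u₁, v₁, w₁⟩ | ⟨a₁, e₁, u₁, v₁, w₁⟩) <;>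
    rcases route_elem s d j (by omega) with
      (⟨a₂, e₂, u₂, v₂, w₂⟩ | ⟨a₂, e₂, u₂, v₂, w₂⟩ | ⟨a₂, e₂, u₂, v₂, w₂⟩ | ⟨a₂, e₂, u₂, v₂, w₂⟩) <;>
    rcases route_elem s d k hk with
      (⟨a₃, e₃, u₃, v₃, w₃⟩ | ⟨a₃, e₃, u₃, v₃, w₃⟩ | ⟨a₃, e₃, u₃, v₃, w₃⟩ | ⟨a₃, e₃, u₃, v₃, w₃⟩) <;>
    rw [e₁] at hx <;> rw [e₃] at hy <;> rw [e₂] <;>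
    simp only [rlink_mem, llink_mem, ulink_mem, dlink_mem] at hx hy ⊢ <;>
    omega


/-- Under XY routing on an m × n 2D mesh, the links shared by two flows' paths,
if any, form a single contiguous subpath of each path (a single contention
domain). -/
theorem xy_single_contention_domain (m n : ℕ) (s₁ d₁ s₂ d₂ : ℤ × ℤ)
    (hs₁ : 0 ≤ s₁.1 ∧ s₁.1 < m ∧ 0 ≤ s₁.2 ∧ s₁.2 < n)
    (hd₁ : 0 ≤ d₁.1 ∧ d₁.1 < m ∧ 0 ≤ d₁.2 ∧ d₁.2 < n)
    (hs₂ : 0 ≤ s₂.1 ∧ s₂.1 < m ∧ 0 ≤ s₂.2 ∧ s₂.2 < n)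
    (hd₂ : 0 ≤ d₂.1 ∧ d₂.1 < m ∧ 0 ≤ d₂.2 ∧ d₂.2 < n) :
    (xyRoute s₁ d₁).filter (fun l => l ∈ xyRoute s₂ d₂) ≠ [] →
      ((xyRoute s₁ d₁).filter (fun l => l ∈ xyRoute s₂ d₂)) <:+: xyRoute s₁ d₁ ∧
      ((xyRoute s₂ d₂).filter (fun l => l ∈ xyRoute s₁ d₁)) <:+: xyRoute s₂ d₂ := by
  intro _
  exact ⟨(contig_xyRoute s₁ d₁ s₂ d₂).filter_infix, (contig_xyRoute s₂ d₂ s₁ d₁).filter_infix⟩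
end
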